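/- arXiv:0901.1451 — 2 statements merged into one kernel-verified Lean document; each statement's English description precedes it below -/
import Mathlib

section
/- Suppose v is a looped vertex of the marked graph G (v itself may be marked or unmarked) and no neighbor of v is marked. Then A·[G] = B·[G − {v,v}] + (A² − B²)·[G^v − v], where G − {v,v} is obtained from G by removing the loop at v. (Equivalently, [G] = A^{-1}B·[G − {v,v}] + (A − A^{-1}B²)·[G^v − v].) -/
open MvPolynomial

/-- A marked graph: a finite vertex set, an adjacency matrix over GF(2)
(the diagonal entry at `v` is 1 iff `v` carries a loop; for `v ≠ w` the `(v,w)` entry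
is 1 iff `v` and `w` are adjacent), a designated set of marked vertices, and a number
of free loops. -/
structure MarkedGraph (V : Type) [Fintype V] [DecidableEq V] where
  adj : Matrix V V (ZMod 2)
  marked : V → Bool
  freeLoops : ℕ

namespace MarkedGraph

variable {V : Type} [Fintype V] [DecidableEq V]

/-- GF(2)-nullity of a square matrix: the dimension of its kernel. -/
noncomputable def nullity {ι : Type*} [Fintype ι] (M : Matrix ι ι (ZMod 2)) : ℕ :=
  Module.finrank (ZMod 2) (LinearMap.ker M.mulVecLin)

/-- The diagonal matrix `Δ_T` over GF(2) whose diagonal entry at `v` is 1 iff `v ∈ T`. -/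
def delta (T : Finset V) : Matrix V V (ZMod 2) :=
  Matrix.diagonal fun v => if v ∈ T then 1 else 0

/-- The vertices kept in the submatrix `𝒜(G)_T`: delete each marked vertex whose
diagonal entry in `𝒜(G) + Δ_T` is 0. -/
def keep (G : MarkedGraph V) (T : Finset V) : Finset V :=
  Finset.univ.filter fun v => ¬ (G.marked v = true ∧ (G.adj + delta T) v v = 0)

/-- The submatrix `𝒜(G)_T` of `𝒜(G) + Δ_T`. -/
def subMat (G : MarkedGraph V) (T : Finset V) :
    Matrix (G.keep T) (G.keep T) (ZMod 2) :=
  fun i j => (G.adj + delta T) i.1 j.1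

/-- The marked-graph bracket polynomial `[G] ∈ ℤ[A,B,d]`, where `A = X 0`, `B = X 1`,
`d = X 2`:  `[G] = d^φ ⬝ Σ_{T ⊆ V(G)} A^(n-|T|) B^(|T|) d^(ν(𝒜(G)_T))`. -/
noncomputable def bracket (G : MarkedGraph V) : MvPolynomial (Fin 3) ℤ :=
  X 2 ^ G.freeLoops *
    ∑ T : Finset V,
      X 0 ^ (Fintype.card V - T.card) * X 1 ^ T.card * X 2 ^ nullity (G.subMat T)

/-- `x` is a neighbor of `v` (no vertex is a neighbor of itself). -/
def nbr (G : MarkedGraph V) (v x : V) : Prop := x ≠ v ∧ G.adj v x = 1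

instance (G : MarkedGraph V) (v x : V) : Decidable (G.nbr v x) :=
  inferInstanceAs (Decidable (x ≠ v ∧ G.adj v x = 1))

/-- Delete the vertices in `s`, together with all incident edges
(marks and free loops unchanged). -/
def delete (G : MarkedGraph V) (s : Finset V) : MarkedGraph {v : V // v ∉ s} where
  adj := fun i j => G.adj i.1 j.1
  marked := fun i => G.marked i.1
  freeLoops := G.freeLoops

/-- The local complement `G^v`: toggle every entry of the adjacency matrix (diagonal
entries included) whose row and column indices are both neighbors of `v`. -/
def localComp (G : MarkedGraph V) (v : V) : MarkedGraph V :=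
  { G with adj := fun x y => if G.nbr v x ∧ G.nbr v y then G.adj x y + 1 else G.adj x y }

/-- `G - {v,v}`: remove the loop at `v` (set the diagonal entry at `v` to 0). -/
def removeLoop (G : MarkedGraph V) (v : V) : MarkedGraph V :=
  { G with adj := fun x y => if x = v ∧ y = v then 0 else G.adj x y }

/-- `G + I`: toggle all loops. -/
def addI (G : MarkedGraph V) : MarkedGraph V :=
  { G with adj := G.adj + 1 }

/-- `G⁺`: adjoin one free loop. -/
def addFreeLoop (G : MarkedGraph V) : MarkedGraph V :=
  { G with freeLoops := G.freeLoops + 1 }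

/-- The condition under which the pivot `G^{vw}` toggles the adjacency between `x`
and `y`: `x` is a neighbor of `v`, `y` is a neighbor of `w`, and either `x` is not a
neighbor of `w` or `y` is not a neighbor of `v`. -/
def pivotCond (G : MarkedGraph V) (v w x y : V) : Prop :=
  G.nbr v x ∧ G.nbr w y ∧ (¬ G.nbr w x ∨ ¬ G.nbr v y)

instance (G : MarkedGraph V) (v w x y : V) : Decidable (G.pivotCond v w x y) :=
  inferInstanceAs (Decidable (G.nbr v x ∧ G.nbr w y ∧ (¬ G.nbr w x ∨ ¬ G.nbr v y)))

/-- The pivot `G^{vw}`: toggle the adjacency between every pair of distinct vertices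
`x, y ∉ {v,w}` such that `x` is a neighbor of `v`, `y` is a neighbor of `w`, and
either `x` is not a neighbor of `w` or `y` is not a neighbor of `v`
(loops are unaffected). -/
def pivot (G : MarkedGraph V) (v w : V) : MarkedGraph V :=
  { G with adj := fun x y =>
      if x ≠ v ∧ x ≠ w ∧ y ≠ v ∧ y ≠ w ∧ x ≠ y ∧
          (G.pivotCond v w x y ∨ G.pivotCond v w y x)
      then G.adj x y + 1 else G.adj x y }

/-- Interchange the neighbors of `v` and `w` in an adjacency matrix, keeping loops
and the edge between `v` and `w` unchanged. -/
def swapAdjacencies (M : Matrix V V (ZMod 2)) (v w : V) : Matrix V V (ZMod 2) :=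
  fun x y =>
    if x = y then M x y
    else if (x = v ∧ y = w) ∨ (x = w ∧ y = v) then M x y
    else M (Equiv.swap v w x) (Equiv.swap v w y)

/-- The marked pivot `G_c^{vw}`: the pivot `G^{vw}` with the marks on `v` and `w`
toggled and the neighbors of `v` and `w` interchanged (loops, the edge between `v`
and `w`, and free loops unchanged). -/
def markedPivot (G : MarkedGraph V) (v w : V) : MarkedGraph V where
  adj := swapAdjacencies (G.pivot v w).adj v w
  marked := fun u => if u = v ∨ u = w then !(G.marked u) else G.marked u
  freeLoops := G.freeLoops

/-- The disjoint union of two marked graphs: block-diagonal adjacency matrix,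
each vertex marked as it was, free loops added. -/
def disjUnion {V₁ V₂ : Type} [Fintype V₁] [DecidableEq V₁] [Fintype V₂] [DecidableEq V₂]
    (G₁ : MarkedGraph V₁) (G₂ : MarkedGraph V₂) : MarkedGraph (V₁ ⊕ V₂) where
  adj := Matrix.fromBlocks G₁.adj 0 0 G₂.adj
  marked := Sum.elim G₁.marked G₂.marked
  freeLoops := G₁.freeLoops + G₂.freeLoops

/-- Remove the three edges `{u,v}`, `{u,w}`, `{v,w}` (all else unchanged). -/
def removeEdges3 (G : MarkedGraph V) (u v w : V) : MarkedGraph V :=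
  { G with adj := fun x y =>
      if (x = u ∧ y = v) ∨ (x = v ∧ y = u) ∨ (x = u ∧ y = w) ∨ (x = w ∧ y = u) ∨
          (x = v ∧ y = w) ∨ (x = w ∧ y = v)
      then 0 else G.adj x y }

/-- Adjoin one isolated, unmarked vertex with no incident edges; it is looped iff
`loop = true`. -/
def addIsolated (G : MarkedGraph V) (loop : Bool) : MarkedGraph (Option V) where
  adj := fun x y =>
    match x, y with
    | some a, some b => G.adj a b
    | none, none => if loop then 1 else 0
    | _, _ => 0
  marked := fun x => match x with | some a => G.marked a | none => false
  freeLoops := G.freeLoops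

/-- The number of vertices of `s` that are adjacent to `x`. -/
def countAdj (G : MarkedGraph V) (x : V) (s : Finset V) : ℕ :=
  (s.filter fun y => G.adj x y = 1).card

/-- The reduced marked-graph bracket `⟨G⟩ ∈ ℤ[A, A⁻¹]`: substitute `B ↦ A⁻¹` and
`d ↦ -A² - A⁻²` in `[G]`. -/
noncomputable def reducedBracket (G : MarkedGraph V) : LaurentPolynomial ℤ :=
  MvPolynomial.aeval
    ![LaurentPolynomial.T 1, LaurentPolynomial.T (-1),
      -LaurentPolynomial.T 2 - LaurentPolynomial.T (-2)] G.bracket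

/-- The number of looped vertices of `G`. -/
def numLoops (G : MarkedGraph V) : ℕ :=
  (Finset.univ.filter fun v => G.adj v v = 1).card

/-- The Jones polynomial `V_G = (-1)^n ⬝ q^(3n-6ℓ) ⬝ ⟨G⟩(q⁻¹)`, as a Laurent
polynomial in the formal variable `q` (representing `t^(1/4)`); substituting
`A ↦ q⁻¹` in `⟨G⟩` amounts to substituting `A ↦ q⁻¹`, `B ↦ q`, `d ↦ -q² - q⁻²`
in `[G]`. -/
noncomputable def jones (G : MarkedGraph V) : LaurentPolynomial ℤ :=
  (-1) ^ Fintype.card V *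
    LaurentPolynomial.T (3 * (Fintype.card V : ℤ) - 6 * (G.numLoops : ℤ)) *
    MvPolynomial.aeval
      ![LaurentPolynomial.T (-1), LaurentPolynomial.T 1,
        -LaurentPolynomial.T 2 - LaurentPolynomial.T (-2)] G.bracket

end MarkedGraph

/-!
Sort the states `T` by whether they contain `v`. Toggling `v` in `T` while removing the loop
at `v` leaves `𝒜(G) + Δ_T` unchanged, so the states of `G - {v,v}` are those of `G` with `v`
toggled; this gives the `B`-term. If `v ∉ T`, the diagonal entry of `v` in `𝒜(G) + Δ_T` is
`1`, so `v` survives in `𝒜(G)_T`, and pivoting on it preserves the GF(2)-nullity. Since the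
graph is symmetric, the Schur complement is exactly `𝒜(G^v - v) + Δ_T`, and since no neighbor
of `v` is marked, local complementation does not change which marked vertices are deleted.
Comparing the coefficients of each state gives the identity.
-/

open scoped symmDiff

namespace Finset

variable {α : Type*} [DecidableEq α]

theorem card_symmDiff_singleton_add_one {s : Finset α} {a : α} (h : a ∈ s) :
    (s ∆ {a}).card + 1 = s.card := by
  rw [symmDiff_of_ge (singleton_subset_iff.mpr h), sdiff_singleton_eq_erase,
    card_erase_add_one h]

theorem card_symmDiff_singleton_of_notMem {s : Finset α} {a : α} (h : a ∉ s) :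
    (s ∆ {a}).card = s.card + 1 := by
  rw [symmDiff_eq_union (disjoint_singleton_right.mpr h), union_singleton,
    card_insert_of_notMem h]

end Finset

section PowerIdentities

variable {R : Type*} (a b c : R) {n k l : ℕ}

theorem mul_pow_sub_mul_pow_of_succ_eq [CommSemiring R] (hl : l + 1 = k) (hk : k ≤ n) :
    a * (a ^ (n - k) * b ^ k * c) = b * (a ^ (n - l) * b ^ l * c) := by
  obtain ⟨m, rfl⟩ := Nat.exists_eq_add_of_le hk
  subst hl
  rw [show l + 1 + m - (l + 1) = m by omega, show l + 1 + m - l = m + 1 by omega]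
  ring

theorem mul_pow_sub_mul_pow_of_eq_succ [CommRing R] (hl : l = k + 1) (hk : l ≤ n) :
    a * (a ^ (n - k) * b ^ k * c) =
      b * (a ^ (n - l) * b ^ l * c) + (a ^ 2 - b ^ 2) * (a ^ (n - 1 - k) * b ^ k * c) := by
  obtain ⟨m, rfl⟩ := Nat.exists_eq_add_of_le hk
  subst hl
  rw [show k + 1 + m - k = m + 1 by omega, show k + 1 + m - (k + 1) = m by omega,
    show k + 1 + m - 1 - k = m by omega]
  ring

end PowerIdentities

namespace MarkedGraph

section Nullity

open Matrix

variable {ι κ : Type*} [Fintype ι] [Fintype κ]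

theorem nullity_add_rank (M : Matrix ι ι (ZMod 2)) : nullity M + M.rank = Fintype.card ι := by
  rw [nullity, Matrix.rank, add_comm, LinearMap.finrank_range_add_finrank_ker,
    Module.finrank_fintype_fun_eq_card]

theorem nullity_submatrix_equiv (M : Matrix ι ι (ZMod 2)) (e : κ ≃ ι) :
    nullity (M.submatrix e e) = nullity M := by
  have h₁ := nullity_add_rank (M.submatrix e e)
  have h₂ := nullity_add_rank M
  rw [Matrix.rank_submatrix, Fintype.card_congr e] at h₁
  omega

theorem card_ker_eq_two_pow_nullity (M : Matrix ι ι (ZMod 2)) :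
    Nat.card {x // M *ᵥ x = 0} = 2 ^ nullity M := by
  calc Nat.card {x // M *ᵥ x = 0} = Nat.card (LinearMap.ker M.mulVecLin) :=
        Nat.card_congr (Equiv.subtypeEquivRight fun x => by simp [LinearMap.mem_ker])
    _ = 2 ^ nullity M := by
        rw [Module.natCard_eq_pow_finrank (K := ZMod 2), Nat.card_zmod, nullity]

theorem nullity_eq_of_ker_equiv {M : Matrix ι ι (ZMod 2)} {N : Matrix κ κ (ZMod 2)}
    (e : {x // M *ᵥ x = 0} ≃ {y // N *ᵥ y = 0}) : nullity M = nullity N := by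
  have h := Nat.card_congr e
  rw [card_ker_eq_two_pow_nullity, card_ker_eq_two_pow_nullity] at h
  exact Nat.pow_right_injective le_rfl h

/-- Over GF(2) this is the Schur complement `M i j - M i v * (M v v)⁻¹ * M v j` of an entry
`M v v = 1`. -/
def schurComplement (M : Matrix ι ι (ZMod 2)) (v : ι) :
    Matrix {i // i ≠ v} {i // i ≠ v} (ZMod 2) :=
  fun i j => M i j + M i v * M v j

variable [DecidableEq ι]

theorem mulVec_apply_eq_add_sum_ne (M : Matrix ι ι (ZMod 2)) (v i : ι) (x : ι → ZMod 2) :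
    (M *ᵥ x) i = M i v * x v + ∑ j : {j // j ≠ v}, M i j * x j :=
  Fintype.sum_eq_add_sum_subtype_ne (fun j => M i j * x j) v

theorem mulVec_eq_zero_iff_schurComplement {M : Matrix ι ι (ZMod 2)} {v : ι} (hv : M v v = 1)
    (x : ι → ZMod 2) :
    M *ᵥ x = 0 ↔ x v = ∑ j : {j // j ≠ v}, M v j * x j ∧
      schurComplement M v *ᵥ (fun j => x j) = 0 := by
  have schur_apply (i : {i // i ≠ v}) : (schurComplement M v *ᵥ (fun j => x j)) i =
      (M *ᵥ x) i + M i v * (M *ᵥ x) v := by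
    rw [mulVec_apply_eq_add_sum_ne M v i, mulVec_apply_eq_add_sum_ne M v v, hv, one_mul]
    simp only [schurComplement, Matrix.mulVec, dotProduct, add_mul, Finset.sum_add_distrib,
      mul_assoc, ← Finset.mul_sum]
    grind
  constructor
  · intro hx
    have hxv : (M *ᵥ x) v = 0 := by rw [hx]; rfl
    refine ⟨?_, funext fun i => ?_⟩
    · rw [mulVec_apply_eq_add_sum_ne M v v, hv, one_mul] at hxv
      exact CharTwo.add_eq_zero.mp hxv
    · rw [schur_apply, hx]
      simp
  · rintro ⟨hxv, hS⟩
    have hMv : (M *ᵥ x) v = 0 := by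
      rw [mulVec_apply_eq_add_sum_ne M v v, hv, one_mul, hxv, CharTwo.add_self_eq_zero]
    funext i
    by_cases hi : i = v
    · rw [hi, hMv]; rfl
    · have := congrFun hS ⟨i, hi⟩
      rw [schur_apply, hMv, mul_zero, add_zero] at this
      exact this

theorem nullity_schurComplement {M : Matrix ι ι (ZMod 2)} {v : ι} (hv : M v v = 1) :
    nullity (schurComplement M v) = nullity M := by
  let extend (u : {i // i ≠ v} → ZMod 2) (i : ι) : ZMod 2 :=
    if h : i = v then ∑ j : {j // j ≠ v}, M v j * u j else u ⟨i, h⟩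
  have extend_val (u : {i // i ≠ v} → ZMod 2) (j : {i // i ≠ v}) : extend u j = u j := dif_neg j.2
  refine (nullity_eq_of_ker_equiv (M := M) (N := schurComplement M v)
    { toFun := fun x => ⟨fun j => x.1 j, ((mulVec_eq_zero_iff_schurComplement hv x.1).mp x.2).2⟩
      invFun := fun u => ⟨extend u.1, (mulVec_eq_zero_iff_schurComplement hv _).mpr
        ⟨by simp only [extend_val]; exact dif_pos rfl, by simpa only [extend_val] using u.2⟩⟩
      left_inv := fun x => Subtype.ext (funext fun i => ?_)
      right_inv := fun u => Subtype.ext (funext (extend_val u.1)) }).symm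
  by_cases hi : i = v
  · subst hi
    exact (dif_pos rfl).trans ((mulVec_eq_zero_iff_schurComplement hv x.1).mp x.2).1.symm
  · exact dif_neg hi

end Nullity

section Bracket

variable {V : Type} [Fintype V] [DecidableEq V]

theorem nullity_subMat_eq_of_adj_add_delta_eq {G₁ G₂ : MarkedGraph V} {T₁ T₂ : Finset V}
    (h : G₁.adj + delta T₁ = G₂.adj + delta T₂) (hm : G₁.marked = G₂.marked) :
    nullity (G₁.subMat T₁) = nullity (G₂.subMat T₂) := by
  have hkeep (x : V) : x ∈ G₁.keep T₁ ↔ x ∈ G₂.keep T₂ := by simp only [keep, hm, h]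
  rw [← nullity_submatrix_equiv (G₂.subMat T₂) (Equiv.subtypeEquivRight hkeep)]
  congr 1
  ext i j
  exact congrFun (congrFun h i) j

theorem removeLoop_adj_add_delta_symmDiff {G : MarkedGraph V} {v : V} (hv : G.adj v v = 1)
    (T : Finset V) : (G.removeLoop v).adj + delta (T ∆ {v}) = G.adj + delta T := by
  ext x y
  simp only [Matrix.add_apply]
  simp only [removeLoop, delta]
  by_cases hxy : x = y
  · subst hxy
    by_cases hx : x = v
    · subst hx
      by_cases hxT : x ∈ T <;> simp [Finset.mem_symmDiff, hv, hxT, CharTwo.add_self_eq_zero]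
    · simp [Finset.mem_symmDiff, hx]
  · have : ¬(x = v ∧ y = v) := fun h => hxy (h.1.trans h.2.symm)
    simp [hxy, this]

theorem bracket_removeLoop {G : MarkedGraph V} {v : V} (hv : G.adj v v = 1) :
    (G.removeLoop v).bracket = X 2 ^ G.freeLoops * ∑ T : Finset V,
      X 0 ^ (Fintype.card V - (T ∆ {v}).card) * X 1 ^ (T ∆ {v}).card *
        X 2 ^ nullity (G.subMat T) := by
  rw [bracket]
  congr 1
  refine (Fintype.sum_equiv ((symmDiff_left_involutive {v}).toPerm) _ _ fun T => ?_).symm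
  rw [Function.Involutive.coe_toPerm,
    nullity_subMat_eq_of_adj_add_delta_eq (removeLoop_adj_add_delta_symmDiff hv T) rfl]

section LocalComplement

variable {G : MarkedGraph V} {v : V} {T : Finset V}

theorem mem_keep_localComp_delete (hnbr : ∀ x, G.nbr v x → G.marked x = false)
    (x : {x // x ∉ ({v} : Finset V)}) :
    x ∈ ((G.localComp v).delete {v}).keep (T.subtype (· ∉ ({v} : Finset V))) ↔
      x.1 ∈ G.keep T := by
  simp only [keep, Matrix.add_apply]
  simp only [delete, localComp, delta, Matrix.diagonal_apply_eq, Finset.mem_subtype]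
  by_cases hx : G.marked x.1 = true
  · have : ¬ G.nbr v x.1 := fun h => by simp [hnbr x.1 h] at hx
    simp [this]
  · simp [hx]

theorem localComp_delete_adj_add_delta_apply (hsym : G.adj.IsSymm)
    (a b : {x // x ∉ ({v} : Finset V)}) :
    (((G.localComp v).delete {v}).adj + delta (T.subtype (· ∉ ({v} : Finset V)))) a b =
      (G.adj + delta T) a b + (G.adj + delta T) a v * (G.adj + delta T) v b := by
  have ha : a.1 ≠ v := fun h => a.2 (Finset.mem_singleton.mpr h)
  have hb : b.1 ≠ v := fun h => b.2 (Finset.mem_singleton.mpr h)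
  have toggle (p q x : ZMod 2) : (if p = 1 ∧ q = 1 then x + 1 else x) = x + p * q := by
    revert p q x; decide
  simp only [Matrix.add_apply]
  simp only [delete, localComp, nbr, delta, Matrix.diagonal_apply_ne _ ha,
    Matrix.diagonal_apply_ne' _ hb, add_zero, hsym.apply v a, Matrix.diagonal_apply,
    Subtype.ext_iff, Finset.mem_subtype, ne_eq, ha, hb, not_false_eq_true, true_and, toggle]
  ring

theorem nullity_subMat_localComp_delete (hsym : G.adj.IsSymm) (hv : G.adj v v = 1)
    (hnbr : ∀ x, G.nbr v x → G.marked x = false) (hT : v ∉ T) :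
    nullity (((G.localComp v).delete {v}).subMat (T.subtype (· ∉ ({v} : Finset V)))) =
      nullity (G.subMat T) := by
  have hvv : (G.adj + delta T) v v = 1 := by simp [Matrix.add_apply, delta, hT, hv]
  have hvK : v ∈ G.keep T := by simp [keep, -Matrix.add_apply, hvv]
  let e : ((G.localComp v).delete {v}).keep (T.subtype (· ∉ ({v} : Finset V))) ≃
      {i : G.keep T // i ≠ ⟨v, hvK⟩} :=
    { toFun := fun a => ⟨⟨a.1.1, (mem_keep_localComp_delete hnbr a.1).mp a.2⟩,
        fun h => a.1.2 (Finset.mem_singleton.mpr (congrArg Subtype.val h))⟩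
      invFun := fun i => ⟨⟨i.1.1, fun h => i.2 (Subtype.ext (Finset.mem_singleton.mp h))⟩,
        (mem_keep_localComp_delete hnbr _).mpr i.1.2⟩
      left_inv := fun _ => rfl
      right_inv := fun _ => rfl }
  have hsub : ((G.localComp v).delete {v}).subMat (T.subtype (· ∉ ({v} : Finset V))) =
      (schurComplement (G.subMat T) ⟨v, hvK⟩).submatrix e e := by
    ext a b
    exact localComp_delete_adj_add_delta_apply hsym a.1 b.1
  rw [hsub, nullity_submatrix_equiv]
  exact nullity_schurComplement (M := G.subMat T) hvv

theorem bracket_localComp_delete (hsym : G.adj.IsSymm) (hv : G.adj v v = 1)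
    (hnbr : ∀ x, G.nbr v x → G.marked x = false) :
    ((G.localComp v).delete {v}).bracket = X 2 ^ G.freeLoops * ∑ T : Finset V,
      if v ∉ T then X 0 ^ (Fintype.card V - 1 - T.card) * X 1 ^ T.card * X 2 ^ nullity (G.subMat T)
      else 0 := by
  have hcard : Fintype.card {x // x ∉ ({v} : Finset V)} = Fintype.card V - 1 := by
    simp [Fintype.card_subtype_compl]
  rw [bracket, hcard, ← Finset.sum_filter]
  congr 1
  symm
  refine Finset.sum_nbij' (fun T => T.subtype (· ∉ ({v} : Finset V)))
    (fun S => S.map (Function.Embedding.subtype _)) (by simp) (by simp) ?_ ?_ ?_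
  · intro T hT
    exact Finset.subtype_map_of_mem fun x hx h => by simp_all
  · intro S _
    ext x
    simpa using fun _ => x.2
  · intro T hT
    have hTv : v ∉ T := by simpa using hT
    have hcardT : (T.subtype (· ∉ ({v} : Finset V))).card = T.card := by
      rw [Finset.card_subtype, Finset.filter_true_of_mem fun x hx h => by simp_all]
    rw [hcardT, nullity_subMat_localComp_delete hsym hv hnbr hTv]

end LocalComplement

end Bracket

end MarkedGraph

/-- If `v` is a looped vertex with no marked neighbor then
`A⬝[G] = B⬝[G - {v,v}] + (A² - B²)⬝[G^v - v]`. -/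
theorem bracket_looped {V : Type} [Fintype V] [DecidableEq V]
    (G : MarkedGraph V) (hsym : G.adj.IsSymm) (v : V)
    (hlooped : G.adj v v = 1)
    (hnbr : ∀ x, G.nbr v x → G.marked x = false) :
    X 0 * G.bracket =
      X 1 * (G.removeLoop v).bracket +
        (X 0 ^ 2 - X 1 ^ 2) * ((G.localComp v).delete {v}).bracket := by
  set n := Fintype.card V
  set ν := fun T : Finset V => MarkedGraph.nullity (G.subMat T)
  have termwise (T : Finset V) :
      (X 0 : MvPolynomial (Fin 3) ℤ) * (X 0 ^ (n - T.card) * X 1 ^ T.card * X 2 ^ ν T) =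
        X 1 * (X 0 ^ (n - (T ∆ {v}).card) * X 1 ^ (T ∆ {v}).card * X 2 ^ ν T) +
          (X 0 ^ 2 - X 1 ^ 2) *
            (if v ∉ T then X 0 ^ (n - 1 - T.card) * X 1 ^ T.card * X 2 ^ ν T else 0) := by
    by_cases hvT : v ∈ T
    · rw [if_neg (not_not.mpr hvT), mul_zero, add_zero]
      exact mul_pow_sub_mul_pow_of_succ_eq _ _ _
        (Finset.card_symmDiff_singleton_add_one hvT) (Finset.card_le_univ T)
    · rw [if_pos hvT]
      exact mul_pow_sub_mul_pow_of_eq_succ _ _ _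
        (Finset.card_symmDiff_singleton_of_notMem hvT) (Finset.card_le_univ _)
  have sums := Finset.sum_congr rfl fun T (_ : T ∈ Finset.univ) => termwise T
  rw [← Finset.mul_sum, Finset.sum_add_distrib, ← Finset.mul_sum, ← Finset.mul_sum] at sums
  rw [MarkedGraph.bracket, MarkedGraph.bracket_removeLoop hlooped,
    MarkedGraph.bracket_localComp_delete hsym hlooped hnbr]
  linear_combination X 2 ^ G.freeLoops * sums
end

section
/- Suppose v is a looped marked vertex of the marked graph G and no neighbor of v is marked. Then [G] = [G^v − {v,v}], the bracket polynomial of the marked graph obtained from the local complement G^v by removing the loop at v (the vertex v is retained). -/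
open MvPolynomial

/-!
For every state `T`, compare `M = 𝒜(G) + Δ_T` with `M' = 𝒜(G') + Δ_T`, where
`G' = G^v − {v,v}`. Away from `v`, `M'` is `M` plus the rank-one term
`M v x * M v y`, i.e. the Schur complement of `M` at the entry `M v v`, and row `v` is the
same in both. The diagonal entries at `v` differ by `1`, so exactly one of them is `1`; in the
other matrix the marked vertex `v` is deleted. Because no neighbour of `v` is marked, the other
deletions agree. Hence one of `𝒜(G)_T`, `𝒜(G')_T` is the Schur complement of the other at a
unit pivot, and both have the same nullity, so `[G]` and `[G']` agree term by term.
-/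

namespace Matrix

variable {K ι : Type*} [Field K] [Fintype ι] [DecidableEq ι]

/-- The Schur complement of the `1 × 1` block `M p p`. -/
def pivotComplement (M : Matrix ι ι K) (p : ι) : Matrix {i // i ≠ p} {i // i ≠ p} K :=
  of fun i j => M i j - M i p * (M p p)⁻¹ * M p j

theorem mulVec_apply_eq_add_sum_subtype_ne (M : Matrix ι ι K) (x : ι → K) (i p : ι) :
    (M *ᵥ x) i = M i p * x p + ∑ j : {j // j ≠ p}, M i j * x j :=
  Fintype.sum_eq_add_sum_subtype_ne _ p

theorem pivotComplement_mulVec_comp_val (M : Matrix ι ι K) {p : ι} (hp : M p p ≠ 0)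
    (x : ι → K) (i : {i // i ≠ p}) :
    (M.pivotComplement p *ᵥ (x ∘ (↑))) i =
      (M *ᵥ x) i - M i p * (M p p)⁻¹ * (M *ᵥ x) p := by
  rw [mulVec_apply_eq_add_sum_subtype_ne _ _ _ p, mulVec_apply_eq_add_sum_subtype_ne _ _ _ p]
  simp only [mulVec, dotProduct, pivotComplement, of_apply, Function.comp_apply, sub_mul,
    Finset.sum_sub_distrib, ← Finset.mul_sum, mul_assoc]
  field_simp
  ring

/-- Restricting to the coordinates `≠ p` is an isomorphism between the kernels: the coordinate
at `p` of a kernel vector of `M` is determined by the others through row `p`. -/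
theorem finrank_ker_pivotComplement (M : Matrix ι ι K) {p : ι} (hp : M p p ≠ 0) :
    Module.finrank K (LinearMap.ker (M.pivotComplement p).mulVecLin) =
      Module.finrank K (LinearMap.ker M.mulVecLin) := by
  let r : (ι → K) →ₗ[K] ({i // i ≠ p} → K) := LinearMap.funLeft K K (↑)
  have hr : ∀ x ∈ LinearMap.ker M.mulVecLin,
      r x ∈ LinearMap.ker (M.pivotComplement p).mulVecLin := by
    intro x hx
    rw [LinearMap.mem_ker, mulVecLin_apply] at hx ⊢
    ext i
    simp [r, LinearMap.funLeft, pivotComplement_mulVec_comp_val M hp, hx]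
  refine (LinearEquiv.ofBijective (r.restrict hr) ⟨?_, ?_⟩).finrank_eq.symm
  · rw [← LinearMap.ker_eq_bot, LinearMap.ker_eq_bot']
    rintro ⟨x, hx⟩ hrx
    have hxj : ∀ j : {j // j ≠ p}, x j = 0 := fun j => congrFun (congrArg Subtype.val hrx) j
    have hxp : x p = 0 := by
      simpa [mulVec_apply_eq_add_sum_subtype_ne _ _ _ p, hxj, hp] using
        congrFun (LinearMap.mem_ker.mp hx) p
    ext i
    by_cases hi : i = p
    · subst hi; exact hxp
    · exact hxj ⟨i, hi⟩
  · rintro ⟨y, hy⟩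
    let x : ι → K := fun i =>
      if h : i = p then -(M p p)⁻¹ * ∑ j : {j // j ≠ p}, M p j * y j else y ⟨i, h⟩
    have hxj : ∀ j : {j // j ≠ p}, x j = y j := fun j => dif_neg j.2
    have hxp : (M *ᵥ x) p = 0 := by
      rw [mulVec_apply_eq_add_sum_subtype_ne _ _ _ p]
      simp only [hxj, x, dif_pos]
      field_simp
      ring
    have hx : M *ᵥ x = 0 := by
      ext i
      by_cases hi : i = p
      · subst hi; exact hxp
      · have h := pivotComplement_mulVec_comp_val M hp x ⟨i, hi⟩
        rw [hxp, mul_zero, sub_zero, show x ∘ (↑) = y from funext hxj, ← mulVecLin_apply,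
          LinearMap.mem_ker.mp hy] at h
        exact h.symm
    exact ⟨⟨x, hx⟩, Subtype.ext (funext hxj)⟩

end Matrix

theorem ZMod.eq_zero_of_ne_one_two : ∀ {a : ZMod 2}, a ≠ 1 → a = 0 := by decide

namespace MarkedGraph

theorem delta_apply_of_ne {V : Type} [DecidableEq V] (T : Finset V) {x y : V} (h : x ≠ y) :
    delta T x y = 0 :=
  Matrix.diagonal_apply_ne _ h

variable {V : Type} [Fintype V] [DecidableEq V]

theorem rank_add_nullity {ι : Type*} [Fintype ι] (M : Matrix ι ι (ZMod 2)) :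
    M.rank + nullity M = Fintype.card ι :=
  (LinearMap.finrank_range_add_finrank_ker M.mulVecLin).trans
    (Module.finrank_fintype_fun_eq_card _)

theorem nullity_submatrix {ι κ : Type*} [Fintype ι] [Fintype κ] (M : Matrix ι ι (ZMod 2))
    (e : κ ≃ ι) : nullity (M.submatrix e e) = nullity M := by
  have h := rank_add_nullity (M.submatrix e e)
  rw [Matrix.rank_submatrix, Fintype.card_congr e, ← rank_add_nullity M] at h
  omega

theorem nullity_pivotComplement {ι : Type*} [Fintype ι] [DecidableEq ι]
    (M : Matrix ι ι (ZMod 2)) {p : ι} (hp : M p p = 1) :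
    nullity (M.pivotComplement p) = nullity M :=
  M.finrank_ker_pivotComplement (hp ▸ one_ne_zero)

theorem mem_keep_iff {H : MarkedGraph V} {T : Finset V} {x : V} :
    x ∈ H.keep T ↔ ¬(H.marked x = true ∧ (H.adj + delta T) x x = 0) := by
  simp [keep]

theorem mem_keep_iff_of_marked {H H' : MarkedGraph V} {x : V} (T : Finset V)
    (hm : H'.marked x = H.marked x) (hd : H.marked x = true → H'.adj x x = H.adj x x) :
    x ∈ H'.keep T ↔ x ∈ H.keep T := by
  by_cases h : H.marked x = true <;> simp [keep, hm, h, hd]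

/-- `𝒜(H')_T` is, up to relabelling, the Schur complement of `𝒜(H)_T` at a vertex `v`
whose diagonal entry is `1`. -/
theorem nullity_subMat_eq_of_pivot (H H' : MarkedGraph V) (T : Finset V) {v : V}
    (hsym : H.adj.IsSymm) (hvv : (H.adj + delta T) v v = 1) (hv' : v ∉ H'.keep T)
    (hkeep : ∀ x, x ≠ v → (x ∈ H'.keep T ↔ x ∈ H.keep T))
    (hadj : ∀ x y, x ≠ v → y ≠ v → H'.adj x y = H.adj x y + H.adj v x * H.adj v y) :
    nullity (H'.subMat T) = nullity (H.subMat T) := by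
  have hv : v ∈ H.keep T := by simp [mem_keep_iff, hvv]
  let p : H.keep T := ⟨v, hv⟩
  have hne {x : V} (hx : x ∈ H'.keep T) : x ≠ v := ne_of_mem_of_not_mem hx hv'
  let e : H'.keep T ≃ {i : H.keep T // i ≠ p} :=
    { toFun := fun x => ⟨⟨x, (hkeep x (hne x.2)).1 x.2⟩, fun h => hne x.2 congr($h.1)⟩
      invFun := fun i => ⟨i.1, (hkeep i.1 fun h => i.2 (Subtype.ext h)).2 i.1.2⟩ }
  have hsub : H'.subMat T = ((H.subMat T).pivotComplement p).submatrix e e := by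
    ext x y
    have hx := hne x.2
    have hy := hne y.2
    change (H'.adj + delta T) x y = (H.adj + delta T) x y -
      (H.adj + delta T) x v * ((H.adj + delta T) v v)⁻¹ * (H.adj + delta T) v y
    simp only [hvv, inv_one, mul_one, Matrix.add_apply, delta_apply_of_ne T hx,
      delta_apply_of_ne T hy.symm, add_zero, hadj x y hx hy, hsym.apply v x, CharTwo.sub_eq_add]
    ring
  rw [hsub, nullity_submatrix, nullity_pivotComplement (M := H.subMat T) (p := p) hvv]

theorem localComp_adj_of_ne (G : MarkedGraph V) {v x y : V} (hx : x ≠ v) (hy : y ≠ v) :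
    (G.localComp v).adj x y = G.adj x y + G.adj v x * G.adj v y := by
  simp only [localComp, nbr, hx, hy, ne_eq, not_false_eq_true, true_and]
  generalize G.adj x y = a, G.adj v x = b, G.adj v y = c
  revert a b c
  decide

theorem localComp_adj_left (G : MarkedGraph V) (v y : V) :
    (G.localComp v).adj v y = G.adj v y :=
  if_neg fun h => h.1.1 rfl

theorem localComp_isSymm {G : MarkedGraph V} (hsym : G.adj.IsSymm) (v : V) :
    (G.localComp v).adj.IsSymm :=
  Matrix.IsSymm.ext fun x y => by
    simp only [localComp, hsym.apply x y, and_comm]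

theorem removeLoop_adj_of_ne_left (G : MarkedGraph V) {v x : V} (hx : x ≠ v) (y : V) :
    (G.removeLoop v).adj x y = G.adj x y :=
  if_neg fun h => hx h.1

theorem removeLoop_adj_of_ne_right (G : MarkedGraph V) {v y : V} (x : V) (hy : y ≠ v) :
    (G.removeLoop v).adj x y = G.adj x y :=
  if_neg fun h => hy h.2

theorem removeLoop_isSymm {G : MarkedGraph V} (hsym : G.adj.IsSymm) (v : V) :
    (G.removeLoop v).adj.IsSymm :=
  Matrix.IsSymm.ext fun x y => by
    simp only [removeLoop, hsym.apply x y, and_comm]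

theorem nullity_subMat_localComp_removeLoop (G : MarkedGraph V) (hsym : G.adj.IsSymm) {v : V}
    (hlooped : G.adj v v = 1) (hmarked : G.marked v = true)
    (hnbr : ∀ x, G.nbr v x → G.marked x = false) (T : Finset V) :
    nullity (((G.localComp v).removeLoop v).subMat T) = nullity (G.subMat T) := by
  set G' := (G.localComp v).removeLoop v
  have hadj : ∀ x y, x ≠ v → y ≠ v → G'.adj x y = G.adj x y + G.adj v x * G.adj v y :=
    fun x y hx hy => by rw [removeLoop_adj_of_ne_left _ hx, localComp_adj_of_ne _ hx hy]
  have hrow : ∀ x, x ≠ v → G'.adj v x = G.adj v x :=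
    fun x hx => by rw [removeLoop_adj_of_ne_right _ _ hx, localComp_adj_left]
  have hloop : G'.adj v v = 0 := if_pos ⟨rfl, rfl⟩
  have hkeep : ∀ x, x ≠ v → (x ∈ G'.keep T ↔ x ∈ G.keep T) := by
    refine fun x hx => mem_keep_iff_of_marked T rfl fun hm => ?_
    have hvx : G.adj v x = 0 := ZMod.eq_zero_of_ne_one_two fun h => by
      simp [hnbr x ⟨hx, h⟩] at hm
    rw [hadj x x hx hx, hvx, zero_mul, add_zero]
  by_cases hvT : v ∈ T
  · refine (nullity_subMat_eq_of_pivot G' G T (removeLoop_isSymm (localComp_isSymm hsym v) v)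
      ?_ ?_ (fun x hx => (hkeep x hx).symm) fun x y hx hy => ?_).symm
    · simp [Matrix.add_apply, hloop, delta, hvT]
    · simp [mem_keep_iff, hmarked, Matrix.add_apply, hlooped, delta, hvT,
        CharTwo.add_self_eq_zero]
    · rw [hadj x y hx hy, hrow x hx, hrow y hy, add_assoc, CharTwo.add_self_eq_zero, add_zero]
  · refine nullity_subMat_eq_of_pivot G G' T hsym ?_ ?_ hkeep hadj
    · simp [Matrix.add_apply, hlooped, delta, hvT]
    · have hmarked' : G'.marked v = true := hmarked
      simp [mem_keep_iff, hmarked', Matrix.add_apply, hloop, delta, hvT]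

end MarkedGraph

/-- If `v` is a looped marked vertex with no marked neighbor then
`[G] = [G^v - {v,v}]` (the local complement with the loop at `v` removed;
`v` is retained). -/
theorem bracket_reverse {V : Type} [Fintype V] [DecidableEq V]
    (G : MarkedGraph V) (hsym : G.adj.IsSymm) (v : V)
    (hlooped : G.adj v v = 1) (hmarked : G.marked v = true)
    (hnbr : ∀ x, G.nbr v x → G.marked x = false) :
    G.bracket = ((G.localComp v).removeLoop v).bracket := by
  unfold MarkedGraph.bracket
  congr 1
  refine Finset.sum_congr rfl fun T _ => ?_
  rw [MarkedGraph.nullity_subMat_localComp_removeLoop G hsym hlooped hmarked hnbr T]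
end
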